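/- arXiv:1410.5856 — 2 statements merged into one kernel-verified Lean document; each statement's English description precedes it below -/
import Mathlib

section
/- Let n ≥ 2, let λ ∈ ℝ^n lie in the Gårding cone Γ₂ (σ₁(λ) > 0 and σ₂(λ) > 0), and let T : Fin n × Fin n × Fin n → ℝ be fully symmetric (invariant under all permutations of the indices). Then Σ_{i,j,k} T_{ijk}² − Σ_k (Σ_i T_{iik})² ≥ 2 Σ_{i≠j} T_{iij}² − (1/(2σ₂(λ))) Σ_k (Σ_i (σ₁(λ) − λ_i) T_{iik})². -/
/-- The `k`-th elementary symmetric polynomial of `λ_1, …, λ_n`. -/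
noncomputable def esymm (n k : ℕ) (lam : Fin n → ℝ) : ℝ :=
  ∑ s ∈ Finset.univ.powersetCard k, ∏ i ∈ s, lam i

/-!
Fix the last index `k`. By symmetry each `T_{kkj}²` with `j ≠ k` occurs twice off the diagonal of
the slice `∑_{i,j} T_{ijk}²`, which accounts for `2 ∑_{i≠j} T_{iij}²`. What remains concerns the
vector `a_i = T_{iik}` and the Lorentzian form `Q(a) = (∑ a)² - ∑ a² = 2σ₂(a)`, whose polarization
is `Q(λ, a) = ∑ (σ₁(λ) - λ_i) a_i`. Since `Q(λ) = 2σ₂(λ) > 0`, the reverse Cauchy–Schwarz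
inequality `Q(λ) Q(a) ≤ Q(λ, a)²` holds, and summing it over `k` gives the claim.
-/

open Finset

theorem esymm_eq_eval_esymm (n k : ℕ) (lam : Fin n → ℝ) :
    esymm n k lam = MvPolynomial.eval lam (MvPolynomial.esymm (Fin n) ℝ k) := by
  simp [esymm, MvPolynomial.esymm]

theorem esymm_one (n : ℕ) (lam : Fin n → ℝ) : esymm n 1 lam = ∑ i, lam i := by
  simp [esymm_eq_eval_esymm]

theorem two_mul_esymm_two (n : ℕ) (lam : Fin n → ℝ) :
    2 * esymm n 2 lam = (∑ i, lam i) ^ 2 - ∑ i, lam i ^ 2 := by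
  have newton := congrArg (MvPolynomial.eval lam) (MvPolynomial.mul_esymm_eq_sum (Fin n) ℝ 2)
  simp [esymm_eq_eval_esymm, MvPolynomial.psum, Nat.sum_antidiagonal_eq_sum_range_succ_mk,
    sum_range_succ] at newton ⊢
  linear_combination newton

section Lorentz

variable {ι : Type*} [Fintype ι]

theorem sq_sum_le_sum_sq_of_sum_mul_sum_eq {lam x : ι → ℝ}
    (hlam : ∑ i, lam i ^ 2 < (∑ i, lam i) ^ 2)
    (horth : (∑ i, lam i) * ∑ i, x i = ∑ i, lam i * x i) :
    (∑ i, x i) ^ 2 ≤ ∑ i, x i ^ 2 := by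
  have hpos : 0 < (∑ i, lam i) ^ 2 := (sum_nonneg fun i _ => sq_nonneg (lam i)).trans_lt hlam
  refine le_of_mul_le_mul_left ?_ hpos
  calc (∑ i, lam i) ^ 2 * (∑ i, x i) ^ 2 = (∑ i, lam i * x i) ^ 2 := by rw [← horth]; ring
    _ ≤ (∑ i, lam i ^ 2) * ∑ i, x i ^ 2 := sum_mul_sq_le_sq_mul_sq univ lam x
    _ ≤ (∑ i, lam i) ^ 2 * ∑ i, x i ^ 2 := by gcongr

theorem mul_sq_sum_sub_sum_sq_le {lam a : ι → ℝ}
    (hlam : ∑ i, lam i ^ 2 < (∑ i, lam i) ^ 2) :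
    ((∑ i, lam i) ^ 2 - ∑ i, lam i ^ 2) * ((∑ i, a i) ^ 2 - ∑ i, a i ^ 2) ≤
      (∑ i, (∑ j, lam j - lam i) * a i) ^ 2 := by
  obtain ⟨D, hD⟩ : ∃ D, D = (∑ i, lam i) ^ 2 - ∑ i, lam i ^ 2 := ⟨_, rfl⟩
  obtain ⟨B, hB⟩ : ∃ B, B = (∑ i, lam i) * (∑ i, a i) - ∑ i, lam i * a i := ⟨_, rfl⟩
  have hpolar : ∑ i, (∑ j, lam j - lam i) * a i = B := by
    simp only [hB, sub_mul, sum_sub_distrib, mul_sum]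
  -- `D a - B λ` is orthogonal to `λ` for the Lorentzian form, whose value on it is `D (D Q(a) - B²)`.
  have hsum : ∑ i, (D * a i - B * lam i) = D * ∑ i, a i - B * ∑ i, lam i := by
    simp only [sum_sub_distrib, mul_sum]
  have hlin : ∑ i, lam i * (D * a i - B * lam i) =
      D * ∑ i, lam i * a i - B * ∑ i, lam i ^ 2 := by
    simp only [mul_sub, sum_sub_distrib, mul_sum]
    congr 1 <;> exact sum_congr rfl fun i _ => by ring
  have hsq : ∑ i, (D * a i - B * lam i) ^ 2 =
      D ^ 2 * ∑ i, a i ^ 2 - 2 * D * B * ∑ i, lam i * a i + B ^ 2 * ∑ i, lam i ^ 2 := by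
    simp only [sub_sq, sum_add_distrib, sum_sub_distrib, mul_sum]
    congr 1; congr 1
    all_goals exact sum_congr rfl fun i _ => by ring
  have hneg := sq_sum_le_sum_sq_of_sum_mul_sum_eq (x := fun i => D * a i - B * lam i) hlam
    (by rw [hsum, hlin, hB, hD]; ring)
  rw [hsum, hsq] at hneg
  rw [hpolar, ← hD]
  refine le_of_mul_le_mul_left ?_ (hD ▸ sub_pos.2 hlam : 0 < D)
  subst hD hB
  linear_combination hneg

end Lorentz

theorem sum_diag_add_row_add_col_le {ι M : Type*} [Fintype ι] [DecidableEq ι]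
    [AddCommMonoid M] [PartialOrder M] [IsOrderedAddMonoid M]
    {f : ι → ι → M} (hf : ∀ i j, 0 ≤ f i j) (k : ι) :
    ∑ i, f i i + ∑ j ∈ univ.erase k, f k j + ∑ i ∈ univ.erase k, f i k ≤ ∑ i, ∑ j, f i j := by
  have hcol : ∑ i ∈ univ.erase k, f i k ≤ ∑ i ∈ univ.erase k, ∑ j ∈ univ.erase i, f i j :=
    sum_le_sum fun i hi =>
      single_le_sum (fun j _ => hf i j) (mem_erase.2 ⟨(ne_of_mem_erase hi).symm, mem_univ k⟩)
  calc ∑ i, f i i + ∑ j ∈ univ.erase k, f k j + ∑ i ∈ univ.erase k, f i k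
      ≤ ∑ i, f i i + (∑ j ∈ univ.erase k, f k j +
          ∑ i ∈ univ.erase k, ∑ j ∈ univ.erase i, f i j) := by
        rw [add_assoc]; gcongr
    _ = ∑ i, (f i i + ∑ j ∈ univ.erase i, f i j) := by
        rw [add_sum_erase _ (fun i => ∑ j ∈ univ.erase i, f i j) (mem_univ k), sum_add_distrib]
    _ = ∑ i, ∑ j, f i j := sum_congr rfl fun i _ => add_sum_erase _ _ (mem_univ i)

theorem sym_tensor_norm_garding_ineq_general (n : ℕ) (lam : Fin n → ℝ)
    (h2 : 0 < esymm n 2 lam)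
    (T : Fin n × Fin n × Fin n → ℝ)
    (hsymm : ∀ i j k : Fin n, T (i, j, k) = T (j, i, k) ∧ T (i, j, k) = T (i, k, j)) :
    (∑ i, ∑ j, ∑ k, T (i, j, k) ^ 2) - ∑ k, (∑ i, T (i, i, k)) ^ 2 ≥
      2 * (∑ i, ∑ j ∈ Finset.univ.erase i, T (i, i, j) ^ 2)
        - (1 / (2 * esymm n 2 lam)) *
            ∑ k, (∑ i, (esymm n 1 lam - lam i) * T (i, i, k)) ^ 2 := by
  have hslice (k : Fin n) : ∑ i, T (i, i, k) ^ 2 + 2 * ∑ j ∈ univ.erase k, T (k, k, j) ^ 2 ≤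
      ∑ i, ∑ j, T (i, j, k) ^ 2 := by
    have := sum_diag_add_row_add_col_le (f := fun i j => T (i, j, k) ^ 2) (fun _ _ => sq_nonneg _) k
    simp only [fun j => (hsymm k j k).2, fun i => (hsymm i k k).1] at this
    linarith
  have hlorentz (k : Fin n) : (∑ i, T (i, i, k)) ^ 2 - ∑ i, T (i, i, k) ^ 2 ≤
      (∑ i, (esymm n 1 lam - lam i) * T (i, i, k)) ^ 2 / (2 * esymm n 2 lam) := by
    rw [le_div_iff₀ (by positivity), mul_comm, two_mul_esymm_two, esymm_one]
    exact mul_sq_sum_sub_sum_sq_le (by linarith [two_mul_esymm_two n lam])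
  have hslices := sum_le_sum fun k (_ : k ∈ univ) => hslice k
  have hlorentzs := sum_le_sum fun k (_ : k ∈ univ) => hlorentz k
  have htotal : ∑ i, ∑ j, ∑ k, T (i, j, k) ^ 2 = ∑ k, ∑ i, ∑ j, T (i, j, k) ^ 2 :=
    (sum_congr rfl fun _ _ => sum_comm).trans sum_comm
  rw [sum_add_distrib, ← mul_sum] at hslices
  rw [sum_sub_distrib, ← sum_div] at hlorentzs
  rw [htotal, one_div_mul_eq_div]
  linarith

/-- For `λ` in the Gårding cone `Γ₂` and a fully symmetric `T`,
`∑_{i,j,k} T_{ijk}² - ∑_k (∑_i T_{iik})²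
  ≥ 2 ∑_{i≠j} T_{iij}² - (1/(2σ₂(λ))) ∑_k (∑_i (σ₁(λ) - λ_i) T_{iik})²`. -/
theorem sym_tensor_norm_garding_ineq (n : ℕ) (hn : 2 ≤ n) (lam : Fin n → ℝ)
    (h1 : 0 < esymm n 1 lam) (h2 : 0 < esymm n 2 lam)
    (T : Fin n × Fin n × Fin n → ℝ)
    (hsymm : ∀ i j k : Fin n, T (i, j, k) = T (j, i, k) ∧ T (i, j, k) = T (i, k, j)) :
    (∑ i, ∑ j, ∑ k, T (i, j, k) ^ 2) - ∑ k, (∑ i, T (i, i, k)) ^ 2 ≥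
      2 * (∑ i, ∑ j ∈ Finset.univ.erase i, T (i, i, j) ^ 2)
        - (1 / (2 * esymm n 2 lam)) *
            ∑ k, (∑ i, (esymm n 1 lam - lam i) * T (i, i, k)) ^ 2 :=
  sym_tensor_norm_garding_ineq_general n lam h2 T hsymm
end

section
/- Let E = EuclideanSpace ℝ (Fin n) and let U ⊆ E be open. Let ψ_{ij} : U → ℝ (i, j ∈ Fin n) be C¹ functions such that at every point of U the matrix (ψ_{ij}) is symmetric and positive semidefinite and Σ_j ∂_j ψ_{ij} = 0 for each i; let f : U → ℝ be C¹. For a C² function w define □_{ψ,f} w := Σ_{i,j} ψ_{ij} ∂²_{ij} w − Σ_{i,j} ψ_{ij} (∂_i f)(∂_j w). Let u : U → ℝ be a C² function with u > 0 on U, let c ∈ ℝ satisfy −□_{ψ,f} u(x) ≥ c · u(x) for all x ∈ U, and let v : U → ℝ be a nonnegative C² function whose support is a compact subset of U. Then −∫_U v · (□_{ψ,f} v) · e^{−f} dx ≥ c · ∫_U v² e^{−f} dx. -/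
/-!
Weighted Green formula: since `ψ` is symmetric and divergence free, the field `a e^{-f} ψ ∇b`
has divergence `(⟨∇a, ψ ∇b⟩ + a □b) e^{-f}`, hence `∫_U a □b e^{-f} = -∫_U ⟨∇a, ψ ∇b⟩ e^{-f}`
whenever `a` has compact support in `U`. Apply it to `(v, v)` and, following Barta, to
`(v² / u, u)`. With `s = v / u` one has `∇(v² / u) = 2 s ∇v - s² ∇u`, so
`⟨∇v, ψ ∇v⟩ - ⟨∇(v² / u), ψ ∇u⟩ = ⟨∇v - s ∇u, ψ (∇v - s ∇u)⟩ ≥ 0`, while `-(v² / u) □u ≥ c v²`.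
-/

open MeasureTheory

/-- Directional derivative of `g` at `x` along the `k`-th standard basis vector. -/
noncomputable def pd {n : ℕ} (g : EuclideanSpace ℝ (Fin n) → ℝ) (k : Fin n)
    (x : EuclideanSpace ℝ (Fin n)) : ℝ :=
  fderiv ℝ g x (EuclideanSpace.single k 1)

/-- Second directional derivative `∂²_{ij} w` at `x`. -/
noncomputable def pd2 {n : ℕ} (w : EuclideanSpace ℝ (Fin n) → ℝ) (i j : Fin n)
    (x : EuclideanSpace ℝ (Fin n)) : ℝ :=
  fderiv ℝ (fun y => fderiv ℝ w y (EuclideanSpace.single i 1)) x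
    (EuclideanSpace.single j 1)

/-- The operator `□_{ψ,f} w = ∑_{i,j} ψ_{ij} ∂²_{ij} w - ∑_{i,j} ψ_{ij} (∂_i f)(∂_j w)`. -/
noncomputable def boxOp {n : ℕ} (ψ : Fin n → Fin n → EuclideanSpace ℝ (Fin n) → ℝ)
    (f w : EuclideanSpace ℝ (Fin n) → ℝ) (x : EuclideanSpace ℝ (Fin n)) : ℝ :=
  (∑ i, ∑ j, ψ i j x * pd2 w i j x) - ∑ i, ∑ j, ψ i j x * pd f i x * pd w j x

theorem ContDiffOn.contDiff_of_tsupport_subset {𝕜 E F : Type*} [NontriviallyNormedField 𝕜]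
    [NormedAddCommGroup E] [NormedSpace 𝕜 E] [NormedAddCommGroup F] [NormedSpace 𝕜 F]
    {k : WithTop ℕ∞} {g : E → F} {U : Set E} (hg : ContDiffOn 𝕜 k g U) (hU : IsOpen U)
    (hgU : tsupport g ⊆ U) : ContDiff 𝕜 k g := by
  refine contDiff_iff_contDiffAt.2 fun x => ?_
  by_cases hx : x ∈ U
  · exact hg.contDiffAt (hU.mem_nhds hx)
  · exact contDiffAt_const.congr_of_eventuallyEq
      (notMem_tsupport_iff_eventuallyEq.1 fun h => hx (hgU h))

theorem ContinuousOn.integrable_of_forall_notMem_eq_zero {X E : Type*} [TopologicalSpace X]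
    [T2Space X] [MeasurableSpace X] [OpensMeasurableSpace X] [NormedAddCommGroup E]
    {μ : Measure X} [IsFiniteMeasureOnCompacts μ] {g : X → E} {U K : Set X}
    (hg : ContinuousOn g U) (hU : IsOpen U) (hK : IsCompact K) (hKU : K ⊆ U)
    (hg0 : ∀ x ∉ K, g x = 0) : Integrable g μ :=
  (hg.continuous_of_tsupport_subset hU ((closure_minimal (Function.support_subset_iff'.2 hg0)
    hK.isClosed).trans hKU)).integrable_of_hasCompactSupport (HasCompactSupport.intro hK hg0)

theorem HasCompactSupport.integrable_fderiv_apply {E G : Type*} [NormedAddCommGroup E]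
    [NormedSpace ℝ E] [NormedAddCommGroup G] [NormedSpace ℝ G] [MeasurableSpace E]
    [OpensMeasurableSpace E] {μ : Measure E} [IsFiniteMeasureOnCompacts μ] {F : E → G}
    (hF : ContDiff ℝ 1 F) (hF_supp : HasCompactSupport F) (w : E) :
    Integrable (fun x => fderiv ℝ F x w) μ :=
  ((hF.continuous_fderiv one_ne_zero).clm_apply continuous_const).integrable_of_hasCompactSupport
    ((hF_supp.fderiv ℝ).comp_left (g := fun L : E →L[ℝ] G => L w) rfl)

theorem HasCompactSupport.integral_fderiv_apply_eq_zero {E : Type*} [NormedAddCommGroup E]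
    [NormedSpace ℝ E] [FiniteDimensional ℝ E] [MeasurableSpace E] [BorelSpace E]
    {μ : Measure E} [μ.IsAddHaarMeasure] {F : E → ℝ} (hF : ContDiff ℝ 1 F)
    (hF_supp : HasCompactSupport F) (w : E) : ∫ x, fderiv ℝ F x w ∂μ = 0 := by
  have h := integral_mul_fderiv_eq_neg_fderiv_mul_of_integrable (μ := μ) (g := fun _ => (1 : ℝ))
    (v := w) (by simpa using hF_supp.integrable_fderiv_apply hF w) (by simp)
    (by simpa using hF.continuous.integrable_of_hasCompactSupport hF_supp)
    (fun x _ => hF.differentiable one_ne_zero x) (fun x _ => differentiableAt_const 1)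
  simpa using h.symm

section PartialDerivatives

variable {n : ℕ} {U : Set (EuclideanSpace ℝ (Fin n))} {g h : EuclideanSpace ℝ (Fin n) → ℝ}
  {x : EuclideanSpace ℝ (Fin n)}

lemma pd_mul (hg : DifferentiableAt ℝ g x) (hh : DifferentiableAt ℝ h x) (k : Fin n) :
    pd (fun y => g y * h y) k x = pd g k x * h x + g x * pd h k x := by
  simp only [pd, fderiv_fun_mul hg hh, add_apply, smul_apply, smul_eq_mul]
  ring

lemma pd_sum {ι : Type*} {s : Finset ι} {G : ι → EuclideanSpace ℝ (Fin n) → ℝ}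
    (hG : ∀ i ∈ s, DifferentiableAt ℝ (G i) x) (k : Fin n) :
    pd (fun y => ∑ i ∈ s, G i y) k x = ∑ i ∈ s, pd (G i) k x := by
  simp only [pd, fderiv_fun_sum hG, sum_apply]

lemma pd_exp_neg (hg : DifferentiableAt ℝ g x) (k : Fin n) :
    pd (fun y => Real.exp (-g y)) k x = -(Real.exp (-g x) * pd g k x) := by
  rw [pd, pd, hg.hasFDerivAt.fun_neg.exp.fderiv]
  simp

lemma pd_of_notMem_tsupport (hx : x ∉ tsupport g) (k : Fin n) : pd g k x = 0 := by
  simp [pd, fderiv_of_notMem_tsupport ℝ hx]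

lemma ContDiffOn.differentiableAt_of_isOpen (hg : ContDiffOn ℝ 1 g U) (hU : IsOpen U)
    (hx : x ∈ U) : DifferentiableAt ℝ g x :=
  (hg.differentiableOn one_ne_zero).differentiableAt (hU.mem_nhds hx)

lemma ContDiffOn.contDiffOn_pd {m : ℕ} (hg : ContDiffOn ℝ (m + 1) g U) (hU : IsOpen U)
    (k : Fin n) : ContDiffOn ℝ m (pd g k) U :=
  (hg.fderiv_of_isOpen hU le_rfl).clm_apply contDiffOn_const

lemma ContDiffOn.continuousOn_pd (hg : ContDiffOn ℝ 1 g U) (hU : IsOpen U) (k : Fin n) :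
    ContinuousOn (pd g k) U :=
  (hg.contDiffOn_pd (m := 0) hU k).continuousOn

lemma ContDiffOn.continuousOn_pd2 (hg : ContDiffOn ℝ 2 g U) (hU : IsOpen U) (i j : Fin n) :
    ContinuousOn (pd2 g i j) U :=
  (hg.contDiffOn_pd (m := 1) hU i).continuousOn_pd hU j

end PartialDerivatives

open Matrix

lemma Matrix.PosSemidef.dotProduct_mulVec_sub_le {ι : Type*} [Fintype ι] {M : Matrix ι ι ℝ}
    (hM : M.PosSemidef) (p q : ι → ℝ) (s : ℝ) :
    ((2 * s) • p - s ^ 2 • q) ⬝ᵥ M *ᵥ q ≤ p ⬝ᵥ M *ᵥ p := by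
  have hsq := hM.dotProduct_mulVec_nonneg (p - s • q)
  have hswap : q ⬝ᵥ M *ᵥ p = p ⬝ᵥ M *ᵥ q := by
    rw [Matrix.dotProduct_mulVec, ← Matrix.mulVec_transpose, dotProduct_comm]
    simpa using congrArg (fun N => p ⬝ᵥ N *ᵥ q) hM.isHermitian.eq
  simp only [star_trivial, Matrix.mulVec_sub, Matrix.mulVec_smul, dotProduct_sub, sub_dotProduct,
    dotProduct_smul, smul_dotProduct, smul_eq_mul, hswap] at hsq ⊢
  linarith

section CarreDuChamp

variable {n : ℕ} (ψ : Fin n → Fin n → EuclideanSpace ℝ (Fin n) → ℝ)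

noncomputable def carreDuChamp (a b : EuclideanSpace ℝ (Fin n) → ℝ)
    (x : EuclideanSpace ℝ (Fin n)) : ℝ :=
  ∑ i, ∑ j, ψ i j x * pd a i x * pd b j x

lemma boxOp_eq_sub_carreDuChamp (f w : EuclideanSpace ℝ (Fin n) → ℝ)
    (x : EuclideanSpace ℝ (Fin n)) :
    boxOp ψ f w x = (∑ i, ∑ j, ψ i j x * pd2 w i j x) - carreDuChamp ψ f w x :=
  rfl

lemma carreDuChamp_eq_dotProduct_mulVec (a b : EuclideanSpace ℝ (Fin n) → ℝ)
    (x : EuclideanSpace ℝ (Fin n)) :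
    carreDuChamp ψ a b x =
      (fun i => pd a i x) ⬝ᵥ Matrix.of (fun i j => ψ i j x) *ᵥ fun j => pd b j x := by
  simp only [carreDuChamp, dotProduct, Matrix.mulVec, Matrix.of_apply, Finset.mul_sum]
  exact Finset.sum_congr rfl fun i _ => Finset.sum_congr rfl fun j _ => by ring

lemma carreDuChamp_comm {x : EuclideanSpace ℝ (Fin n)} (hsym : ∀ i j, ψ i j x = ψ j i x)
    (a b : EuclideanSpace ℝ (Fin n) → ℝ) : carreDuChamp ψ a b x = carreDuChamp ψ b a x := by
  rw [carreDuChamp, Finset.sum_comm]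
  exact Finset.sum_congr rfl fun i _ => Finset.sum_congr rfl fun j _ => by rw [hsym]; ring

end CarreDuChamp

section Integrability

variable {n : ℕ} {U : Set (EuclideanSpace ℝ (Fin n))}
  {ψ : Fin n → Fin n → EuclideanSpace ℝ (Fin n) → ℝ} {f a b : EuclideanSpace ℝ (Fin n) → ℝ}

lemma continuousOn_carreDuChamp (hU : IsOpen U) (hψ : ∀ i j, ContinuousOn (ψ i j) U)
    (ha : ContDiffOn ℝ 1 a U) (hb : ContDiffOn ℝ 1 b U) :
    ContinuousOn (carreDuChamp ψ a b) U :=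
  continuousOn_finsetSum _ fun i _ => continuousOn_finsetSum _ fun j _ =>
    ((hψ i j).mul (ha.continuousOn_pd hU i)).mul (hb.continuousOn_pd hU j)

lemma continuousOn_boxOp (hU : IsOpen U) (hψ : ∀ i j, ContinuousOn (ψ i j) U)
    (hf : ContDiffOn ℝ 1 f U) (hb : ContDiffOn ℝ 2 b U) : ContinuousOn (boxOp ψ f b) U :=
  (continuousOn_finsetSum _ fun i _ => continuousOn_finsetSum _ fun j _ =>
    (hψ i j).mul (hb.continuousOn_pd2 hU i j)).sub
    (continuousOn_carreDuChamp hU hψ hf (hb.of_le one_le_two))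

lemma integrable_carreDuChamp_mul_exp (hU : IsOpen U) (hψ : ∀ i j, ContinuousOn (ψ i j) U)
    (hf : ContDiffOn ℝ 1 f U) (ha : ContDiffOn ℝ 1 a U) (ha_supp : HasCompactSupport a)
    (haU : tsupport a ⊆ U) (hb : ContDiffOn ℝ 1 b U) :
    Integrable fun x => carreDuChamp ψ a b x * Real.exp (-f x) :=
  ((continuousOn_carreDuChamp hU hψ ha hb).mul
    hf.neg.exp.continuousOn).integrable_of_forall_notMem_eq_zero hU ha_supp.isCompact haU
    fun x hx => by simp [carreDuChamp, pd_of_notMem_tsupport hx]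

lemma integrable_mul_boxOp_mul_exp (hU : IsOpen U) (hψ : ∀ i j, ContinuousOn (ψ i j) U)
    (hf : ContDiffOn ℝ 1 f U) (ha : ContinuousOn a U) (ha_supp : HasCompactSupport a)
    (haU : tsupport a ⊆ U) (hb : ContDiffOn ℝ 2 b U) :
    Integrable fun x => a x * boxOp ψ f b x * Real.exp (-f x) :=
  ((ha.mul (continuousOn_boxOp hU hψ hf hb)).mul
    hf.neg.exp.continuousOn).integrable_of_forall_notMem_eq_zero hU ha_supp.isCompact haU
    fun x hx => by simp [image_eq_zero_of_notMem_tsupport hx]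

end Integrability

section GreenFormula

variable {n : ℕ} {U : Set (EuclideanSpace ℝ (Fin n))}
  {ψ : Fin n → Fin n → EuclideanSpace ℝ (Fin n) → ℝ} {f a b : EuclideanSpace ℝ (Fin n) → ℝ}
  {x : EuclideanSpace ℝ (Fin n)}

noncomputable def weightedFlux (ψ : Fin n → Fin n → EuclideanSpace ℝ (Fin n) → ℝ)
    (f a b : EuclideanSpace ℝ (Fin n) → ℝ) (j : Fin n) (y : EuclideanSpace ℝ (Fin n)) : ℝ :=
  (∑ i, ψ i j y * pd b i y) * (a y * Real.exp (-f y))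

lemma contDiffOn_weightedFlux (hU : IsOpen U) (hψ : ∀ i j, ContDiffOn ℝ 1 (ψ i j) U)
    (hf : ContDiffOn ℝ 1 f U) (ha : ContDiffOn ℝ 1 a U) (hb : ContDiffOn ℝ 2 b U) (j : Fin n) :
    ContDiffOn ℝ 1 (weightedFlux ψ f a b j) U :=
  (ContDiffOn.sum fun i _ => (hψ i j).mul (hb.contDiffOn_pd (m := 1) hU i)).mul
    (ha.mul hf.neg.exp)

lemma support_weightedFlux_subset (j : Fin n) :
    Function.support (weightedFlux ψ f a b j) ⊆ Function.support a :=
  Function.support_subset_iff'.2 fun y hy => by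
    simp [weightedFlux, Function.notMem_support.1 hy]

lemma pd_weightedFlux (hU : IsOpen U) (hψ : ∀ i j, ContDiffOn ℝ 1 (ψ i j) U)
    (hf : ContDiffOn ℝ 1 f U) (ha : ContDiffOn ℝ 1 a U) (hb : ContDiffOn ℝ 2 b U) (hx : x ∈ U)
    (j : Fin n) :
    pd (weightedFlux ψ f a b j) j x =
      (∑ i, (pd (ψ i j) j x * pd b i x + ψ i j x * pd2 b i j x)) * (a x * Real.exp (-f x)) +
        (∑ i, ψ i j x * pd b i x) *
          (pd a j x * Real.exp (-f x) + a x * -(Real.exp (-f x) * pd f j x)) := by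
  have hpdb (i : Fin n) : ContDiffOn ℝ 1 (pd b i) U := hb.contDiffOn_pd (m := 1) hU i
  have hS : pd (fun y => ∑ i, ψ i j y * pd b i y) j x =
      ∑ i, (pd (ψ i j) j x * pd b i x + ψ i j x * pd2 b i j x) := by
    rw [pd_sum fun i _ => ((hψ i j).mul (hpdb i)).differentiableAt_of_isOpen hU hx]
    exact Finset.sum_congr rfl fun i _ => pd_mul ((hψ i j).differentiableAt_of_isOpen hU hx)
      ((hpdb i).differentiableAt_of_isOpen hU hx) j
  have hW : pd (fun y => a y * Real.exp (-f y)) j x =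
      pd a j x * Real.exp (-f x) + a x * -(Real.exp (-f x) * pd f j x) := by
    rw [pd_mul (ha.differentiableAt_of_isOpen hU hx)
      (hf.neg.exp.differentiableAt_of_isOpen hU hx),
      pd_exp_neg (hf.differentiableAt_of_isOpen hU hx)]
  unfold weightedFlux
  rw [pd_mul
    ((ContDiffOn.sum fun i _ => (hψ i j).mul (hpdb i)).differentiableAt_of_isOpen hU hx)
    ((ha.mul hf.neg.exp).differentiableAt_of_isOpen hU hx), hS, hW]

lemma sum_pd_weightedFlux (hU : IsOpen U) (hψ : ∀ i j, ContDiffOn ℝ 1 (ψ i j) U)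
    (hsym : ∀ i j, ψ i j x = ψ j i x) (hdiv : ∀ i, ∑ j, pd (ψ i j) j x = 0)
    (hf : ContDiffOn ℝ 1 f U) (ha : ContDiffOn ℝ 1 a U) (hb : ContDiffOn ℝ 2 b U) (hx : x ∈ U) :
    ∑ j, pd (weightedFlux ψ f a b j) j x =
      (carreDuChamp ψ a b x + a x * boxOp ψ f b x) * Real.exp (-f x) := by
  rw [boxOp_eq_sub_carreDuChamp, carreDuChamp_comm ψ hsym a b, carreDuChamp_comm ψ hsym f b]
  simp only [pd_weightedFlux hU hψ hf ha hb hx, carreDuChamp, Finset.sum_mul, Finset.mul_sum,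
    ← Finset.sum_add_distrib, ← Finset.sum_sub_distrib]
  rw [Finset.sum_comm, ← sub_eq_zero, ← Finset.sum_sub_distrib]
  refine Finset.sum_eq_zero fun i _ => ?_
  rw [← Finset.sum_sub_distrib]
  calc _ = pd b i x * (a x * Real.exp (-f x)) * ∑ j, pd (ψ i j) j x := by
        rw [Finset.mul_sum]
        exact Finset.sum_congr rfl fun j _ => by ring
    _ = 0 := by rw [hdiv, mul_zero]

theorem setIntegral_mul_boxOp_mul_exp (hU : IsOpen U) (hψ : ∀ i j, ContDiffOn ℝ 1 (ψ i j) U)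
    (hsym : ∀ x ∈ U, ∀ i j, ψ i j x = ψ j i x) (hdiv : ∀ i, ∀ x ∈ U, ∑ j, pd (ψ i j) j x = 0)
    (hf : ContDiffOn ℝ 1 f U) (ha : ContDiffOn ℝ 1 a U) (ha_supp : HasCompactSupport a)
    (haU : tsupport a ⊆ U) (hb : ContDiffOn ℝ 2 b U) :
    ∫ x in U, a x * boxOp ψ f b x * Real.exp (-f x) =
      -∫ x in U, carreDuChamp ψ a b x * Real.exp (-f x) := by
  have hψ' (i j : Fin n) : ContinuousOn (ψ i j) U := (hψ i j).continuousOn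
  have hflux_supp (j : Fin n) : tsupport (weightedFlux ψ f a b j) ⊆ tsupport a :=
    closure_mono (support_weightedFlux_subset j)
  have hflux_cpt (j : Fin n) : HasCompactSupport (weightedFlux ψ f a b j) :=
    ha_supp.mono (support_weightedFlux_subset j)
  have hflux (j : Fin n) : ContDiff ℝ 1 (weightedFlux ψ f a b j) :=
    (contDiffOn_weightedFlux hU hψ hf ha hb j).contDiff_of_tsupport_subset hU
      ((hflux_supp j).trans haU)
  have hdiv_int : ∫ x in U, ∑ j, pd (weightedFlux ψ f a b j) j x = 0 := by
    rw [setIntegral_eq_integral_of_forall_compl_eq_zero fun x hx => Finset.sum_eq_zero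
        fun j _ => pd_of_notMem_tsupport (fun h => hx (haU (hflux_supp j h))) j,
      integral_finsetSum _ fun j _ =>
        ((hflux_cpt j).integrable_fderiv_apply (hflux j) _ :
          Integrable fun x => pd (weightedFlux ψ f a b j) j x)]
    exact Finset.sum_eq_zero fun j _ => (hflux_cpt j).integral_fderiv_apply_eq_zero (hflux j) _
  rw [setIntegral_congr_fun hU.measurableSet fun x hx => sum_pd_weightedFlux hU hψ (hsym x hx)
      (fun i => hdiv i x hx) hf ha hb hx] at hdiv_int
  simp only [add_mul] at hdiv_int
  rw [integral_add
    (integrable_carreDuChamp_mul_exp hU hψ' hf ha ha_supp haU (hb.of_le one_le_two)).integrableOn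
    (integrable_mul_boxOp_mul_exp hU hψ' hf ha.continuousOn ha_supp haU hb).integrableOn]
    at hdiv_int
  linarith

end GreenFormula

section Quotient

variable {n : ℕ} {U : Set (EuclideanSpace ℝ (Fin n))}
  {ψ : Fin n → Fin n → EuclideanSpace ℝ (Fin n) → ℝ} {f u v : EuclideanSpace ℝ (Fin n) → ℝ}
  {x : EuclideanSpace ℝ (Fin n)}

lemma support_sq_div_subset :
    Function.support (fun y => v y ^ 2 / u y) ⊆ Function.support v :=
  Function.support_subset_iff'.2 fun y hy => by simp [Function.notMem_support.1 hy]

lemma tsupport_sq_div_subset : tsupport (fun y => v y ^ 2 / u y) ⊆ tsupport v :=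
  closure_mono support_sq_div_subset

lemma pd_sq_div (hU : IsOpen U) (hv : ContDiffOn ℝ 1 v U) (hu : ContDiffOn ℝ 1 u U)
    (hu0 : ∀ y ∈ U, u y ≠ 0) (hx : x ∈ U) (k : Fin n) :
    pd (fun y => v y ^ 2 / u y) k x = 2 * (v x / u x) * pd v k x - (v x / u x) ^ 2 * pd u k x := by
  have hquot : ContDiffOn ℝ 1 (fun y => v y ^ 2 / u y) U := (hv.pow 2).div hu hu0
  -- differentiate `(v ^ 2 / u) * u = v * v`, which holds near `x`
  have hprod : pd (fun y => v y ^ 2 / u y * u y) k x = pd (fun y => v y * v y) k x := by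
    rw [pd, pd, Filter.EventuallyEq.fderiv_eq]
    filter_upwards [hU.mem_nhds hx] with y hy
    field_simp [hu0 y hy]
  rw [pd_mul (hquot.differentiableAt_of_isOpen hU hx) (hu.differentiableAt_of_isOpen hU hx),
    pd_mul (hv.differentiableAt_of_isOpen hU hx) (hv.differentiableAt_of_isOpen hU hx)] at hprod
  field_simp [hu0 x hx] at hprod ⊢
  linear_combination hprod

lemma carreDuChamp_sq_div_le (hU : IsOpen U) (hv : ContDiffOn ℝ 1 v U)
    (hu : ContDiffOn ℝ 1 u U) (hu0 : ∀ y ∈ U, u y ≠ 0) (hx : x ∈ U)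
    (hpsd : (Matrix.of fun i j => ψ i j x).PosSemidef) :
    carreDuChamp ψ (fun y => v y ^ 2 / u y) u x ≤ carreDuChamp ψ v v x := by
  have hgrad : (fun k => pd (fun y => v y ^ 2 / u y) k x) =
      (2 * (v x / u x)) • (fun k => pd v k x) - (v x / u x) ^ 2 • fun k => pd u k x :=
    funext fun k => by simp [pd_sq_div hU hv hu hu0 hx k]
  rw [carreDuChamp_eq_dotProduct_mulVec, carreDuChamp_eq_dotProduct_mulVec, hgrad]
  exact hpsd.dotProduct_mulVec_sub_le _ _ _

lemma setIntegral_carreDuChamp_sq_div_le (hU : IsOpen U) (hψ : ∀ i j, ContinuousOn (ψ i j) U)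
    (hpsd : ∀ x ∈ U, (Matrix.of fun i j => ψ i j x).PosSemidef) (hf : ContDiffOn ℝ 1 f U)
    (hu : ContDiffOn ℝ 1 u U) (hu0 : ∀ y ∈ U, u y ≠ 0) (hv : ContDiffOn ℝ 1 v U)
    (hv_supp : HasCompactSupport v) (hvU : tsupport v ⊆ U) :
    ∫ x in U, carreDuChamp ψ (fun y => v y ^ 2 / u y) u x * Real.exp (-f x) ≤
      ∫ x in U, carreDuChamp ψ v v x * Real.exp (-f x) :=
  setIntegral_mono_on
    (integrable_carreDuChamp_mul_exp hU hψ hf ((hv.pow 2).div hu hu0)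
      (hv_supp.mono support_sq_div_subset) (tsupport_sq_div_subset.trans hvU)
      hu).integrableOn
    (integrable_carreDuChamp_mul_exp hU hψ hf hv hv_supp hvU hv).integrableOn
    hU.measurableSet fun x hx => mul_le_mul_of_nonneg_right
      (carreDuChamp_sq_div_le hU hv hu hu0 hx (hpsd x hx)) (Real.exp_pos _).le

lemma mul_setIntegral_sq_mul_exp_le {c : ℝ} (hU : IsOpen U)
    (hψ : ∀ i j, ContinuousOn (ψ i j) U) (hf : ContDiffOn ℝ 1 f U) (hu : ContDiffOn ℝ 2 u U)
    (hupos : ∀ x ∈ U, 0 < u x) (hc : ∀ x ∈ U, -boxOp ψ f u x ≥ c * u x)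
    (hv : ContinuousOn v U) (hv_supp : HasCompactSupport v) (hvU : tsupport v ⊆ U) :
    c * ∫ x in U, v x ^ 2 * Real.exp (-f x) ≤
      -∫ x in U, v x ^ 2 / u x * boxOp ψ f u x * Real.exp (-f x) := by
  rw [← integral_const_mul, ← integral_neg]
  refine setIntegral_mono_on ?_ ?_ hU.measurableSet fun x hx => ?_
  · exact (((hv.pow 2).mul hf.neg.exp.continuousOn).integrable_of_forall_notMem_eq_zero hU
      hv_supp.isCompact hvU fun x hx => by
        simp [image_eq_zero_of_notMem_tsupport hx]).integrableOn.const_mul c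
  · exact (integrable_mul_boxOp_mul_exp hU hψ hf
      ((hv.pow 2).div hu.continuousOn fun y hy => (hupos y hy).ne')
      (hv_supp.mono support_sq_div_subset) (tsupport_sq_div_subset.trans hvU)
      hu).neg.integrableOn
  have hquot : 0 ≤ v x ^ 2 / u x := div_nonneg (sq_nonneg _) (hupos x hx).le
  calc c * (v x ^ 2 * Real.exp (-f x)) = v x ^ 2 / u x * (c * u x) * Real.exp (-f x) := by
        field_simp [(hupos x hx).ne']
    _ ≤ v x ^ 2 / u x * -boxOp ψ f u x * Real.exp (-f x) := by gcongr; exact hc x hx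
    _ = -(v x ^ 2 / u x * boxOp ψ f u x * Real.exp (-f x)) := by ring

end Quotient

theorem boxOp_eigenvalue_lower_bound_general (n : ℕ)
    (U : Set (EuclideanSpace ℝ (Fin n))) (hU : IsOpen U)
    (ψ : Fin n → Fin n → EuclideanSpace ℝ (Fin n) → ℝ)
    (hψ : ∀ i j, ContDiffOn ℝ 1 (ψ i j) U)
    (hpsd : ∀ x ∈ U, Matrix.PosSemidef (Matrix.of fun i j => ψ i j x))
    (hdiv : ∀ i, ∀ x ∈ U, ∑ j, pd (ψ i j) j x = 0)
    (f : EuclideanSpace ℝ (Fin n) → ℝ) (hf : ContDiffOn ℝ 1 f U)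
    (u : EuclideanSpace ℝ (Fin n) → ℝ) (hu : ContDiffOn ℝ 2 u U)
    (hupos : ∀ x ∈ U, 0 < u x)
    (c : ℝ) (hc : ∀ x ∈ U, -boxOp ψ f u x ≥ c * u x)
    (v : EuclideanSpace ℝ (Fin n) → ℝ) (hv : ContDiffOn ℝ 2 v U)
    (hvsupp : HasCompactSupport v) (hvsub : tsupport v ⊆ U) :
    (-∫ x in U, v x * boxOp ψ f v x * Real.exp (-f x)) ≥
      c * ∫ x in U, v x ^ 2 * Real.exp (-f x) := by
  have hsym (x) (hx : x ∈ U) (i j : Fin n) : ψ i j x = ψ j i x :=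
    ((hpsd x hx).isHermitian.apply i j).symm
  have hψ' (i j : Fin n) : ContinuousOn (ψ i j) U := (hψ i j).continuousOn
  have hu0 (x) (hx : x ∈ U) : u x ≠ 0 := (hupos x hx).ne'
  have hv1 : ContDiffOn ℝ 1 v U := hv.of_le one_le_two
  have hu1 : ContDiffOn ℝ 1 u U := hu.of_le one_le_two
  have hquot : ContDiffOn ℝ 1 (fun y => v y ^ 2 / u y) U := (hv1.pow 2).div hu1 hu0
  calc (-∫ x in U, v x * boxOp ψ f v x * Real.exp (-f x))
      = ∫ x in U, carreDuChamp ψ v v x * Real.exp (-f x) := by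
        rw [setIntegral_mul_boxOp_mul_exp hU hψ hsym hdiv hf hv1 hvsupp hvsub hv, neg_neg]
    _ ≥ ∫ x in U, carreDuChamp ψ (fun y => v y ^ 2 / u y) u x * Real.exp (-f x) :=
        setIntegral_carreDuChamp_sq_div_le hU hψ' hpsd hf hu1 hu0 hv1 hvsupp hvsub
    _ = -∫ x in U, v x ^ 2 / u x * boxOp ψ f u x * Real.exp (-f x) := by
        rw [setIntegral_mul_boxOp_mul_exp hU hψ hsym hdiv hf hquot
          (hvsupp.mono support_sq_div_subset) (tsupport_sq_div_subset.trans hvsub)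
          hu, neg_neg]
    _ ≥ c * ∫ x in U, v x ^ 2 * Real.exp (-f x) :=
        mul_setIntegral_sq_mul_exp_le hU hψ' hf hu hupos hc hv1.continuousOn hvsupp hvsub

/-- Barta-type eigenvalue lower bound: if `ψ` is symmetric positive semidefinite
and divergence free on the open set `U`, `u > 0` is `C²` on `U` with
`-□_{ψ,f} u ≥ c u` on `U`, and `v ≥ 0` is `C²` with compact support contained
in `U`, then `-∫_U v (□_{ψ,f} v) e^{-f} ≥ c ∫_U v² e^{-f}`. -/
theorem boxOp_eigenvalue_lower_bound (n : ℕ)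
    (U : Set (EuclideanSpace ℝ (Fin n))) (hU : IsOpen U)
    (ψ : Fin n → Fin n → EuclideanSpace ℝ (Fin n) → ℝ)
    (hψ : ∀ i j, ContDiffOn ℝ 1 (ψ i j) U)
    (hpsd : ∀ x ∈ U, Matrix.PosSemidef (Matrix.of fun i j => ψ i j x))
    (hdiv : ∀ i, ∀ x ∈ U, ∑ j, pd (ψ i j) j x = 0)
    (f : EuclideanSpace ℝ (Fin n) → ℝ) (hf : ContDiffOn ℝ 1 f U)
    (u : EuclideanSpace ℝ (Fin n) → ℝ) (hu : ContDiffOn ℝ 2 u U)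
    (hupos : ∀ x ∈ U, 0 < u x)
    (c : ℝ) (hc : ∀ x ∈ U, -boxOp ψ f u x ≥ c * u x)
    (v : EuclideanSpace ℝ (Fin n) → ℝ) (hv : ContDiffOn ℝ 2 v U)
    (hvnn : ∀ x ∈ U, 0 ≤ v x)
    (hvsupp : HasCompactSupport v) (hvsub : tsupport v ⊆ U) :
    (-∫ x in U, v x * boxOp ψ f v x * Real.exp (-f x)) ≥
      c * ∫ x in U, v x ^ 2 * Real.exp (-f x) :=
  boxOp_eigenvalue_lower_bound_general n U hU ψ hψ hpsd hdiv f hf u hu hupos c hc v hv hvsupp hvsub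
end
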